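/- arXiv:0906.1629 — 2 statements merged into one kernel-verified Lean document; each statement's English description precedes it below -/
import Mathlib

section
/- Conjugation formula g·δ_α·g⁻¹ = δ_{g(α)}: let g : M ≃ M be an additive automorphism, and let g also denote the induced ring automorphism of ℤ[M]. Set α' = g(α), c' = c ∘ g⁻¹, and s'(λ) = λ − c'(λ)·α'. Then for every u ∈ ℤ[M], (1 − e^{−α'})·g(δ(g⁻¹(u))) = u − e^{−α'}·s'(u); that is, the conjugated operator u ↦ g(δ(g⁻¹(u))) is the Demazure operator associated with the root α' = g(α) and coroot c'. -/
open AddMonoidAlgebra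

noncomputable section

/-- The reflection `λ ↦ λ - c(λ) • α` associated to a root `α` and coroot `c`,
as an additive homomorphism of the weight lattice `M`. -/
def demazureReflection {M : Type*} [AddCommGroup M] (α : M) (c : M →+ ℤ) : M →+ M where
  toFun := fun lam => lam - c lam • α
  map_zero' := by simp
  map_add' := fun x y => by simp only [map_add, add_smul]; abel

/-- The ring endomorphism of the group algebra `ℤ[M]` induced by the reflection
`s(λ) = λ - c(λ)·α`; it sends `e^λ` to `e^{s(λ)}`. -/
def demazureReflectionAlg {M : Type*} [AddCommGroup M] (α : M) (c : M →+ ℤ) :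
    AddMonoidAlgebra ℤ M →+* AddMonoidAlgebra ℤ M :=
  mapDomainRingHom ℤ (demazureReflection α c)

/-! The automorphism `g` intertwines the reflections, `g ∘ s_{α,c} = s_{gα, c∘g⁻¹} ∘ g`, first on
`M` and hence on `ℤ[M]`, since both sides are ring homomorphisms agreeing on every `e^λ`. Applying
`g` to the defining identity of `δ` at `g⁻¹ u` then yields the identity for the root `gα`. -/

namespace AddMonoidAlgebra

variable {M : Type*} [AddCommGroup M]

theorem ringHom_ext_int {S : Type*} [Semiring S] {f f' : AddMonoidAlgebra ℤ M →+* S}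
    (h : ∀ lam : M, f (single lam 1) = f' (single lam 1)) : f = f' :=
  ringHom_ext' (Subsingleton.elim _ _) (MonoidHom.ext fun m => h m.toAdd)

end AddMonoidAlgebra

section Demazure

variable {M : Type*} [AddCommGroup M]

def IsDemazureOperator (α : M) (c : M →+ ℤ)
    (δ : AddMonoidAlgebra ℤ M → AddMonoidAlgebra ℤ M) : Prop :=
  ∀ u, (1 - single (-α) 1) * δ u = u - single (-α) 1 * demazureReflectionAlg α c u

theorem demazureReflectionAlg_single (α : M) (c : M →+ ℤ) (lam : M) (r : ℤ) :
    demazureReflectionAlg α c (single lam r) = single (demazureReflection α c lam) r := by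
  simp [demazureReflectionAlg]

theorem demazureReflection_map (g : M ≃+ M) (α : M) (c : M →+ ℤ) (lam : M) :
    demazureReflection (g α) (c.comp g.symm.toAddMonoidHom) (g lam) =
      g (demazureReflection α c lam) := by
  simp [demazureReflection, map_sub, map_zsmul]

theorem demazureReflectionAlg_comp_of_map_single (g : M ≃+ M) (α : M) (c : M →+ ℤ)
    (G : AddMonoidAlgebra ℤ M →+* AddMonoidAlgebra ℤ M)
    (hG : ∀ lam : M, G (single lam 1) = single (g lam) 1) :
    (demazureReflectionAlg (g α) (c.comp g.symm.toAddMonoidHom)).comp G =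
      G.comp (demazureReflectionAlg α c) :=
  AddMonoidAlgebra.ringHom_ext_int fun lam => by
    simp only [RingHom.comp_apply, hG, demazureReflectionAlg_single, demazureReflection_map]

theorem IsDemazureOperator.conj {α : M} {c : M →+ ℤ}
    {δ : AddMonoidAlgebra ℤ M → AddMonoidAlgebra ℤ M} (hδ : IsDemazureOperator α c δ)
    (g : M ≃+ M) (G : AddMonoidAlgebra ℤ M ≃+* AddMonoidAlgebra ℤ M)
    (hG : ∀ lam : M, G (single lam 1) = single (g lam) 1) :
    IsDemazureOperator (g α) (c.comp g.symm.toAddMonoidHom) (fun u => G (δ (G.symm u))) := by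
  intro u
  have hs := RingHom.congr_fun (demazureReflectionAlg_comp_of_map_single g α c G hG) (G.symm u)
  have h := congrArg G (hδ (G.symm u))
  simp only [RingHom.comp_apply, RingEquiv.coe_toRingHom, RingEquiv.apply_symm_apply] at hs
  simpa only [map_mul, map_sub, map_one, hG, map_neg, RingEquiv.apply_symm_apply, hs] using h

end Demazure

theorem demazure_conjugation_general {M : Type*} [AddCommGroup M]
    (α : M) (c : M →+ ℤ)
    (δ : AddMonoidAlgebra ℤ M →ₗ[ℤ] AddMonoidAlgebra ℤ M)
    (hδ : ∀ u : AddMonoidAlgebra ℤ M,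
      (1 - single (-α) 1) * δ u = u - single (-α) 1 * demazureReflectionAlg α c u)
    (g : M ≃+ M)
    (Galg : AddMonoidAlgebra ℤ M ≃+* AddMonoidAlgebra ℤ M)
    (hGalg : ∀ lam : M, Galg (single lam 1) = single (g lam) 1) :
    ∀ u : AddMonoidAlgebra ℤ M,
      (1 - single (-(g α)) 1) * Galg (δ (Galg.symm u)) =
        u - single (-(g α)) 1 *
          demazureReflectionAlg (g α) (c.comp g.symm.toAddMonoidHom) u :=
  IsDemazureOperator.conj hδ g Galg hGalg

/-- Conjugation formula g δ_α g⁻¹ = δ_{g(α)}: conjugating δ by the ring automorphism of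
ℤ[M] induced by an additive automorphism g of M yields the Demazure operator associated
with the root g(α) and coroot c ∘ g⁻¹. -/
theorem demazure_conjugation {M : Type*} [AddCommGroup M]
    [Module.Free ℤ M] [Module.Finite ℤ M]
    (α : M) (hα : α ≠ 0) (c : M →+ ℤ) (hc : c α = 2)
    (δ : AddMonoidAlgebra ℤ M →ₗ[ℤ] AddMonoidAlgebra ℤ M)
    (hδ : ∀ u : AddMonoidAlgebra ℤ M,
      (1 - single (-α) 1) * δ u = u - single (-α) 1 * demazureReflectionAlg α c u)
    (g : M ≃+ M)
    (Galg : AddMonoidAlgebra ℤ M ≃+* AddMonoidAlgebra ℤ M)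
    (hGalg : ∀ lam : M, Galg (single lam 1) = single (g lam) 1) :
    ∀ u : AddMonoidAlgebra ℤ M,
      (1 - single (-(g α)) 1) * Galg (δ (Galg.symm u)) =
        u - single (-(g α)) 1 *
          demazureReflectionAlg (g α) (c.comp g.symm.toAddMonoidHom) u :=
  demazure_conjugation_general α c δ hδ g Galg hGalg
end
end

section
/- Rank-one Weyl character formula: multiplying by the Weyl denominator 1 − e^{−α} turns the Demazure operator into the symmetrizer, namely δ((1 − e^{−α})·u) = u + s(u) for every u ∈ ℤ[M]. -/
open AddMonoidAlgebra

noncomputable section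

/-! Since `s` sends `e^{-α}` to `e^α = (e^{-α})⁻¹`, the Weyl denominator `1 - e^{-α}` is
anti-invariant up to the unit `e^{-α}`: `e^{-α} · s(1 - e^{-α}) = -(1 - e^{-α})`. Hence applying
the defining identity of `δ` to `(1 - e^{-α}) u` gives
`(1 - e^{-α}) δ((1 - e^{-α}) u) = (1 - e^{-α}) (u + s u)`, and `1 - e^{-α}` can be cancelled because
`ℤ[M]` is a domain for a free `ℤ`-module `M` and `α ≠ 0`. -/

instance Module.Free.uniqueSums_int {M : Type*} [AddCommGroup M] [Module.Free ℤ M] :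
    UniqueSums M :=
  .of_injective_addHom _ (Module.Free.chooseBasis ℤ M).repr.injective inferInstance

theorem AddMonoidAlgebra.one_sub_single_one_ne_zero {R M : Type*} [Ring R] [Nontrivial R]
    [AddMonoid M] {a : M} (ha : a ≠ 0) : (1 - single a 1 : AddMonoidAlgebra R M) ≠ 0 := by
  rw [sub_ne_zero, one_def, Ne, single_left_inj one_ne_zero]
  exact ha.symm

namespace demazureReflectionAlg

variable {M : Type*} [AddCommGroup M] (α : M) (c : M →+ ℤ)

theorem apply_single (lam : M) (r : ℤ) :
    demazureReflectionAlg α c (single lam r) = single (lam - c lam • α) r :=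
  mapDomain_single

theorem apply_single_neg_root {c : M →+ ℤ} (hc : c α = 2) :
    demazureReflectionAlg α c (single (-α) 1) = single α 1 := by
  rw [apply_single, map_neg, hc]
  congr 1
  abel

theorem single_neg_root_mul_apply_weylDenominator {c : M →+ ℤ} (hc : c α = 2) :
    single (-α) 1 * demazureReflectionAlg α c (1 - single (-α) 1) = -(1 - single (-α) 1) := by
  have hunit : (single (-α) 1 : AddMonoidAlgebra ℤ M) * single α 1 = 1 := by
    rw [single_mul_single, neg_add_cancel, mul_one, one_def]
  rw [map_sub, map_one, apply_single_neg_root α hc, mul_sub, hunit, mul_one]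
  abel

end demazureReflectionAlg

theorem demazure_weyl_character_general {M : Type*} [AddCommGroup M]
    [Module.Free ℤ M]
    (α : M) (hα : α ≠ 0) (c : M →+ ℤ) (hc : c α = 2)
    (δ : AddMonoidAlgebra ℤ M →ₗ[ℤ] AddMonoidAlgebra ℤ M)
    (hδ : ∀ u : AddMonoidAlgebra ℤ M,
      (1 - single (-α) 1) * δ u = u - single (-α) 1 * demazureReflectionAlg α c u) :
    ∀ u : AddMonoidAlgebra ℤ M,
      δ ((1 - single (-α) 1) * u) = u + demazureReflectionAlg α c u := by
  intro u
  refine mul_left_cancel₀ (one_sub_single_one_ne_zero (neg_ne_zero.mpr hα)) ?_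
  calc (1 - single (-α) 1) * δ ((1 - single (-α) 1) * u)
      = (1 - single (-α) 1) * u - single (-α) 1 *
          demazureReflectionAlg α c (1 - single (-α) 1) * demazureReflectionAlg α c u := by
        rw [hδ, map_mul, mul_assoc]
    _ = (1 - single (-α) 1) * (u + demazureReflectionAlg α c u) := by
        rw [demazureReflectionAlg.single_neg_root_mul_apply_weylDenominator α hc]
        ring

/-- Rank-one Weyl character formula: δ((1 - e^{-α}) u) = u + s(u). -/
theorem demazure_weyl_character {M : Type*} [AddCommGroup M]
    [Module.Free ℤ M] [Module.Finite ℤ M]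
    (α : M) (hα : α ≠ 0) (c : M →+ ℤ) (hc : c α = 2)
    (δ : AddMonoidAlgebra ℤ M →ₗ[ℤ] AddMonoidAlgebra ℤ M)
    (hδ : ∀ u : AddMonoidAlgebra ℤ M,
      (1 - single (-α) 1) * δ u = u - single (-α) 1 * demazureReflectionAlg α c u) :
    ∀ u : AddMonoidAlgebra ℤ M,
      δ ((1 - single (-α) 1) * u) = u + demazureReflectionAlg α c u :=
  demazure_weyl_character_general α hα c hc δ hδ
end
end
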